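/- Let G be a stochastic diffusion model on a finite node set V with |V| = n ≥ 2 whose τ-step influence function I^τ is submodular and which satisfies the variance bound with constant c ≥ 1 for step limit τ. Fix an integer s ≥ 1 and reals 0 < ε < 1, 0 < δ < 1. Construct the median-of-averages oracle m from r·ℓ i.i.d. simulations arranged in r pools of ℓ simulations each, with r ≥ 28·ln((n+1)^s/δ) and ℓ ≥ 4·c·(14s/(ε(1−ε)))². Let T be the set of the first s nodes chosen greedily with respect to m (each chosen node maximizing the oracle value of the current seed set augmented by one node). Then with probability at least 1 − δ, I^τ(T) ≥ (1 − (1 − 1/s)^s)·(1 − ε)·OPT^τ_s. -/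

import Mathlib

open Finset

/-- A family of activation functions: for each node `v`, a monotone boolean
function of the current active set. -/
abbrev ActFam (V : Type*) := V → Finset V → Bool

section Core
variable {V : Type*} [Fintype V] [DecidableEq V]

/-- One diffusion step: all active nodes stay active, and an inactive node `v`
becomes active when `φ v` evaluates to `true` on the active set (minus `v`). -/
def dstep (φ : ActFam V) (A : Finset V) : Finset V :=
  A ∪ Finset.univ.filter (fun v => φ v (A.erase v) = true)

/-- `reach φ S t` : the set `ρ^t(φ,S)` of nodes active after `t` diffusion steps
from seed set `S`. -/
def reach (φ : ActFam V) (S : Finset V) : ℕ → Finset V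
  | 0 => S
  | t + 1 => dstep φ (reach φ S t)

/-- τ-step influence `I^τ(S)` of a seed set `S`, under the distribution `p` over
activation-function families and utility `H`. -/
noncomputable def infl (p : ActFam V → ℝ) (H : Finset V → ℝ) (τ : ℕ) (S : Finset V) : ℝ :=
  ∑ φ : ActFam V, p φ * H (reach φ S τ)

/-- Variance of the τ-step reachability value `R^τ(S) = H(ρ^τ(φ,S))`. -/
noncomputable def varReach (p : ActFam V → ℝ) (H : Finset V → ℝ) (τ : ℕ) (S : Finset V) : ℝ :=
  ∑ φ : ActFam V, p φ * (H (reach φ S τ) - infl p H τ S) ^ 2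

/-- Submodularity of a set function. -/
def SubmodularFn (F : Finset V → ℝ) : Prop :=
  ∀ A B : Finset V, A ⊆ B → ∀ x ∉ B, F (insert x B) - F B ≤ F (insert x A) - F A

/-- Monotone nondecreasing set function. -/
def MonotoneFn (F : Finset V → ℝ) : Prop :=
  ∀ A B : Finset V, A ⊆ B → F A ≤ F B

/-- A stochastic diffusion model: a probability distribution over families of
monotone activation functions. -/
structure SDM (V : Type*) [Fintype V] [DecidableEq V] where
  p : ActFam V → ℝ
  nonneg : ∀ φ, 0 ≤ p φ
  sum_one : ∑ φ : ActFam V, p φ = 1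
  mono : ∀ φ, p φ ≠ 0 → ∀ v, Monotone (φ v)

/-- The SDM given by weights `p` is independent: the activation functions of the
nodes are mutually independent, i.e. `p` is a product of per-node distributions. -/
def IndepP (p : ActFam V → ℝ) : Prop :=
  ∃ q : V → (Finset V → Bool) → ℝ,
    (∀ v g, 0 ≤ q v g) ∧ (∀ v, ∑ g : Finset V → Bool, q v g = 1) ∧
    (∀ φ, p φ = ∏ v, q v (φ v))

/-- Influence function of the reduced model with respect to `T`:  the expectation,
conditioned on no node outside `T` being directly activated by `T`, of the marginal
utility `H(ρ^τ(φ, S ∪ T)) - H(T)`.  (For an independent SDM this coincides with the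
influence of the reduced model on node set `V ∖ T` with utility `H'(S) = H(S∪T) - H(T)`.) -/
noncomputable def reducedInfl (p : ActFam V → ℝ) (H : Finset V → ℝ) (T : Finset V)
    (τ : ℕ) (S : Finset V) : ℝ :=
  (∑ φ : ActFam V,
      Set.indicator {ψ : ActFam V | ∀ v ∉ T, ψ v (T.erase v) = false} p φ *
        (H (reach φ (S ∪ T) τ) - H T)) /
  (∑ φ : ActFam V, Set.indicator {ψ : ActFam V | ∀ v ∉ T, ψ v (T.erase v) = false} p φ)

/-- Submodularity of a set function restricted to subsets of a ground set `U`. -/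
def SubmodularOn (U : Finset V) (F : Finset V → ℝ) : Prop :=
  ∀ A B : Finset V, A ⊆ B → B ⊆ U → ∀ x ∈ U, x ∉ B →
    F (insert x B) - F B ≤ F (insert x A) - F A

/-- Strong submodularity: the model is independent, the utility is submodular, and
the influence function of every reduced model (w.r.t. any `T` and any step limit)
is submodular on the reduced ground set `V ∖ T`. -/
def StronglySubmodular (p : ActFam V → ℝ) (H : Finset V → ℝ) : Prop :=
  IndepP p ∧ SubmodularFn H ∧
    ∀ (T : Finset V) (τ : ℕ), SubmodularOn Tᶜ (reducedInfl p H T τ)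

/-- `max_{v ∈ V} I^τ({v})`. -/
noncomputable def maxSingle (p : ActFam V → ℝ) (H : Finset V → ℝ) (τ : ℕ) : ℝ :=
  ⨆ v : V, infl p H τ {v}

/-- `OPT^τ_s`, the maximum influence of a seed set of size at most `s`. -/
noncomputable def OPTs (p : ActFam V → ℝ) (H : Finset V → ℝ) (τ : ℕ) (s : ℕ) : ℝ :=
  sSup {x : ℝ | ∃ S : Finset V, S.card ≤ s ∧ x = infl p H τ S}

/-- The variance bound with constant `c`. -/
def VarBoundC (p : ActFam V → ℝ) (H : Finset V → ℝ) (τ : ℕ) (c : ℝ) : Prop :=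
  ∀ T : Finset V,
    varReach p H τ T ≤ c * infl p H τ T * max (infl p H τ T) (maxSingle p H τ)

end Core

/-- Median of `r` reals: the `⌈r/2⌉`-th smallest value. -/
noncomputable def medianR {r : ℕ} (y : Fin r → ℝ) : ℝ :=
  ((List.ofFn y).mergeSort (fun a b => a ≤ b)).getD ((r + 1) / 2 - 1) 0

/-- Probability of the event `P` under (finitely supported) weights `w`. -/
noncomputable def prOf {α : Type*} [Fintype α] (w : α → ℝ) (P : Set α) : ℝ :=
  ∑ a : α, Set.indicator P w a

/-!
For a seed set `S`, each pool average is a mean of `ℓ` i.i.d. copies of `R^τ(S)`, so by Chebyshev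
and the variance bound it misses `I^τ(S)` by more than `θ · max (I^τ(S), max_v I^τ({v}))` with
probability at most `1/4`; the median misses only if half of the `r` independent pools do, which
has probability at most `(97/112)^r ≤ exp (-r/28)`. A union bound over the at most `(n+1)^s` seed
sets of size `≤ s` makes the oracle `θ · OPT`-accurate on all of them with probability `≥ 1 - δ`.
On that event the classical greedy analysis for monotone submodular functions, with an additive
loss `2θ · OPT` per step, gives `I^τ(T) ≥ (1 - (1 - 1/s)^s) (1 - 2sθ) OPT`, and
`θ = ε(1-ε)/(14s)` makes `2sθ ≤ ε`.
-/

section ProductWeights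

/-! A function `η : ι → β` weighted by `∏ i, p (η i)` is an i.i.d. sample from `p`. -/

variable {β : Type*} [Fintype β] {p : β → ℝ} {ι : Type*} [Fintype ι] [DecidableEq ι]

lemma sum_prod_pi_eq_one (hp : ∑ x, p x = 1) : ∑ η : ι → β, ∏ i, p (η i) = 1 := by
  simp [← Fintype.prod_sum, hp]

lemma sum_prod_pi_mul_prod (g : ι → β → ℝ) :
    ∑ η : ι → β, (∏ i, p (η i)) * ∏ i, g i (η i) = ∏ i, ∑ x, p x * g i x := by
  simp only [← Finset.prod_mul_distrib, Fintype.prod_sum]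

lemma sum_prod_pi_mul_apply (hp : ∑ x, p x = 1) (f : β → ℝ) (j : ι) :
    ∑ η : ι → β, (∏ i, p (η i)) * f (η j) = ∑ x, p x * f x := by
  have h := sum_prod_pi_mul_prod (p := p) fun i x => if i = j then f x else 1
  simp_all [mul_ite]

lemma sum_prod_pi_mul_apply_mul_apply (hp : ∑ x, p x = 1) (f g : β → ℝ) {j k : ι}
    (hjk : j ≠ k) :
    ∑ η : ι → β, (∏ i, p (η i)) * (f (η j) * g (η k)) = (∑ x, p x * f x) * ∑ x, p x * g x := by
  set e : ι → β → ℝ := fun i x => if i = j then f x else if i = k then g x else 1 with he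
  have hprod : ∀ F : ι → ℝ, (∀ i, i ≠ j → i ≠ k → F i = 1) → ∏ i, F i = F j * F k :=
    fun F hF => by
      rw [← Finset.prod_subset (Finset.subset_univ {j, k}) (fun i _ hi => by simp_all),
        Finset.prod_pair hjk]
  have h := sum_prod_pi_mul_prod (p := p) e
  rw [hprod _ (fun i hij hik => by simp [he, hij, hik, hp])] at h
  refine Eq.trans (Finset.sum_congr rfl fun η _ => ?_) (h.trans ?_)
  · rw [hprod (fun i => e i (η i)) (fun i hij hik => by simp [he, hij, hik])]
    simp [he, hjk.symm]
  · simp [he, hjk.symm]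

lemma sum_prod_pi_mul_sum_sq (hp : ∑ x, p x = 1) {A : β → ℝ} (hA : ∑ x, p x * A x = 0) :
    ∑ η : ι → β, (∏ i, p (η i)) * (∑ j, A (η j)) ^ 2
      = Fintype.card ι * ∑ x, p x * A x ^ 2 := by
  have hpair : ∀ j k : ι, ∑ η : ι → β, (∏ i, p (η i)) * (A (η j) * A (η k))
      = if j = k then ∑ x, p x * A x ^ 2 else 0 := by
    intro j k
    split_ifs with hjk
    · subst hjk
      simp_rw [← sq]
      exact sum_prod_pi_mul_apply hp (fun x => A x ^ 2) j
    · rw [sum_prod_pi_mul_apply_mul_apply hp A A hjk, hA, zero_mul]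
  calc ∑ η : ι → β, (∏ i, p (η i)) * (∑ j, A (η j)) ^ 2
      = ∑ j, ∑ k, ∑ η : ι → β, (∏ i, p (η i)) * (A (η j) * A (η k)) := by
        simp_rw [sq, Finset.sum_mul_sum, Finset.mul_sum]
        rw [Finset.sum_comm]
        exact Finset.sum_congr rfl fun _ _ => Finset.sum_comm
    _ = Fintype.card ι * ∑ x, p x * A x ^ 2 := by simp [hpair]

end ProductWeights

section Markov

variable {α : Type*} [Fintype α] {w : α → ℝ}

lemma prOf_nonneg (hw : ∀ x, 0 ≤ w x) (E : Set α) : 0 ≤ prOf w E :=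
  Finset.sum_nonneg fun x _ => Set.indicator_nonneg (fun y _ => hw y) x

lemma prOf_mono (hw : ∀ x, 0 ≤ w x) {E F : Set α} (h : E ⊆ F) : prOf w E ≤ prOf w F :=
  Finset.sum_le_sum fun x _ => Set.indicator_le_indicator_of_subset h hw x

lemma prOf_mul_le_sum (hw : ∀ x, 0 ≤ w x) {E : Set α} {Z : α → ℝ} (hZ : ∀ x, 0 ≤ Z x) {a : ℝ}
    (ha : ∀ x ∈ E, a ≤ Z x) : prOf w E * a ≤ ∑ x, w x * Z x := by
  rw [prOf, Finset.sum_mul]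
  refine Finset.sum_le_sum fun x _ => ?_
  by_cases hx : x ∈ E
  · rw [Set.indicator_of_mem hx]
    exact mul_le_mul_of_nonneg_left (ha x hx) (hw x)
  · rw [Set.indicator_of_notMem hx, zero_mul]
    exact mul_nonneg (hw x) (hZ x)

lemma prOf_lt_abs_le_quarter (hw : ∀ x, 0 ≤ w x) {X : α → ℝ} {t : ℝ} (ht : 0 ≤ t)
    (hX : 4 * ∑ x, w x * X x ^ 2 ≤ t ^ 2) : prOf w {x | t < |X x|} ≤ 1 / 4 := by
  rcases ht.lt_or_eq with ht | rfl
  · have h := prOf_mul_le_sum hw (E := {x | t < |X x|}) (fun x => sq_nonneg (X x))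
      (fun x (hx : t < |X x|) => sq_abs (X x) ▸ pow_le_pow_left₀ ht.le hx.le 2)
    nlinarith [pow_pos ht 2]
  · have hnn : ∀ x ∈ Finset.univ, 0 ≤ w x * X x ^ 2 := fun x _ => mul_nonneg (hw x) (sq_nonneg _)
    have hzero := (Finset.sum_eq_zero_iff_of_nonneg hnn).mp
      (le_antisymm (by linarith) (Finset.sum_nonneg hnn))
    have : prOf w {x | 0 < |X x|} = 0 :=
      Finset.sum_eq_zero fun x _ => Set.indicator_apply_eq_zero.mpr fun (hx : 0 < |X x|) =>
        (mul_eq_zero.mp (hzero x (Finset.mem_univ x))).resolve_right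
          (pow_ne_zero 2 (abs_pos.mp hx))
    rw [this]
    norm_num

variable (hw0 : ∀ x, 0 ≤ w x) (hw1 : ∑ x, w x = 1)
include hw0 hw1

lemma one_sub_sum_prOf_le_prOf {ι : Type*} (s : Finset ι) (B : ι → Set α) :
    1 - ∑ i ∈ s, prOf w (B i) ≤ prOf w {x | ∀ i ∈ s, x ∉ B i} := by
  have hpt : ∀ x, w x - ∑ i ∈ s, (B i).indicator w x ≤ {x | ∀ i ∈ s, x ∉ B i}.indicator w x := by
    intro x
    have hnn : ∀ i ∈ s, 0 ≤ (B i).indicator w x := fun i _ =>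
      Set.indicator_nonneg (fun y _ => hw0 y) x
    by_cases hx : x ∈ {x | ∀ i ∈ s, x ∉ B i}
    · rw [Set.indicator_of_mem hx]
      linarith [Finset.sum_nonneg hnn]
    · obtain ⟨i, hi, hxi⟩ : ∃ i ∈ s, x ∈ B i := by simpa using hx
      rw [Set.indicator_of_notMem hx]
      linarith [Set.indicator_of_mem hxi w, Finset.single_le_sum hnn hi]
  calc 1 - ∑ i ∈ s, prOf w (B i) = ∑ x, (w x - ∑ i ∈ s, (B i).indicator w x) := by
        simp only [prOf]
        rw [Finset.sum_sub_distrib, hw1, Finset.sum_comm]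
    _ ≤ _ := Finset.sum_le_sum fun x _ => hpt x

end Markov

section MedianOfMeans

variable {β : Type*} [Fintype β] {p : β → ℝ} (hp0 : ∀ x, 0 ≤ p x) (hp1 : ∑ x, p x = 1)
include hp0 hp1

lemma prOf_lt_abs_sampleMean_sub_le_quarter {ℓ : ℕ} (hℓ : 0 < ℓ) {Y : β → ℝ} {μ t : ℝ}
    (hμ : ∑ x, p x * Y x = μ) (ht : 0 ≤ t) (hvar : 4 * ∑ x, p x * (Y x - μ) ^ 2 ≤ ℓ * t ^ 2) :
    prOf (fun η : Fin ℓ → β => ∏ j, p (η j))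
      {η | t < |1 / (ℓ : ℝ) * ∑ j, Y (η j) - μ|} ≤ 1 / 4 := by
  have hℓR : (0 : ℝ) < ℓ := Nat.cast_pos.mpr hℓ
  have hcentred : ∑ x, p x * (Y x - μ) = 0 := by
    simp only [mul_sub, Finset.sum_sub_distrib, ← Finset.sum_mul, hμ, hp1, one_mul, sub_self]
  have hmean : ∀ η : Fin ℓ → β,
      1 / (ℓ : ℝ) * ∑ j, Y (η j) - μ = 1 / (ℓ : ℝ) * ∑ j, (Y (η j) - μ) := fun η => by
    rw [Finset.sum_sub_distrib, Finset.sum_const, Finset.card_univ, Fintype.card_fin,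
      nsmul_eq_mul]
    field_simp
  simp_rw [hmean]
  refine prOf_lt_abs_le_quarter (fun η => Finset.prod_nonneg fun j _ => hp0 _) ht ?_
  simp_rw [mul_pow, mul_left_comm _ ((1 / (ℓ : ℝ)) ^ 2), ← Finset.mul_sum,
    sum_prod_pi_mul_sum_sq hp1 hcentred, Fintype.card_fin]
  calc 4 * ((1 / (ℓ : ℝ)) ^ 2 * (ℓ * ∑ x, p x * (Y x - μ) ^ 2))
      = 4 * (∑ x, p x * (Y x - μ) ^ 2) / ℓ := by field_simp
    _ ≤ t ^ 2 := by rwa [div_le_iff₀ hℓR, mul_comm _ (ℓ : ℝ)]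

end MedianOfMeans

section Boosting

variable {γ : Type*} [Fintype γ] {w : γ → ℝ}

lemma sum_prod_mul_pow_card_filter (B : Set γ) [DecidablePred (· ∈ B)] (a : ℝ) (r : ℕ) :
    ∑ ω : Fin r → γ, (∏ i, w (ω i)) * a ^ #{i | ω i ∈ B}
      = (∑ x, w x * if x ∈ B then a else 1) ^ r := by
  rw [Fintype.sum_pow]
  refine Finset.sum_congr rfl fun ω _ => ?_
  rw [Finset.prod_mul_distrib, Finset.prod_ite, Finset.prod_const, Finset.prod_const, one_pow,
    mul_one]

/-- Markov's inequality for the exponential moment `(49/16) ^ #{i | ω i ∈ B}`, whose mean is at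
most `(97/64) ^ r`. -/
lemma prOf_le_two_mul_card_mem_le (hw0 : ∀ x, 0 ≤ w x) (hw1 : ∑ x, w x = 1) {B : Set γ}
    [DecidablePred (· ∈ B)] (hB : prOf w B ≤ 1 / 4) (r : ℕ) :
    prOf (fun ω : Fin r → γ => ∏ i, w (ω i)) {ω | r ≤ 2 * #{i | ω i ∈ B}} ≤ (97 / 112) ^ r := by
  have hmoment : ∑ x, w x * (if x ∈ B then 49 / 16 else 1) = 1 + 33 / 16 * prOf w B := by
    have hpt : ∀ x, w x * (if x ∈ B then 49 / 16 else 1) = w x + 33 / 16 * B.indicator w x := by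
      intro x
      by_cases hx : x ∈ B <;> simp [hx]
      ring
    simp_rw [hpt]
    rw [Finset.sum_add_distrib, hw1, ← Finset.mul_sum, prOf]
  have hmarkov := prOf_mul_le_sum (w := fun ω : Fin r → γ => ∏ i, w (ω i))
    (E := {ω | r ≤ 2 * #{i | ω i ∈ B}}) (fun ω => Finset.prod_nonneg fun i _ => hw0 _)
    (Z := fun ω => (49 / 16 : ℝ) ^ #{i | ω i ∈ B}) (fun ω => by positivity) (a := (7 / 4) ^ r)
    (fun ω (hω : r ≤ _) => by
      rw [show (49 / 16 : ℝ) = (7 / 4) ^ 2 by norm_num, ← pow_mul]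
      exact pow_le_pow_right₀ (by norm_num) hω)
  rw [sum_prod_mul_pow_card_filter, hmoment] at hmarkov
  have hbound : (1 + 33 / 16 * prOf w B) ^ r ≤ (97 / 64) ^ r :=
    pow_le_pow_left₀ (by linarith [prOf_nonneg hw0 B]) (by linarith) r
  rw [show (97 / 112 : ℝ) ^ r = (97 / 64) ^ r / (7 / 4) ^ r by rw [← div_pow]; norm_num,
    le_div_iff₀ (by positivity)]
  exact hmarkov.trans hbound

end Boosting

lemma card_filter_eq_countP_ofFn {α : Type*} {r : ℕ} (y : Fin r → α) (q : α → Prop)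
    [DecidablePred q] : #{i | q (y i)} = (List.ofFn y).countP (fun x => decide (q x)) := by
  induction r with
  | zero => simp
  | succ r ih =>
    rw [Fin.card_filter_univ_succ', List.ofFn_succ, List.countP_cons, ih]
    simp [add_comm]

section Median

variable {r : ℕ} (y : Fin r → ℝ)

lemma exists_medianR_eq_getElem (hr : 0 < r) :
    ∃ (l : List ℝ) (k : ℕ) (hk : k < l.length), l.Pairwise (· ≤ ·) ∧ l.Perm (List.ofFn y) ∧
      l.length = r ∧ r ≤ 2 * (k + 1) ∧ r ≤ 2 * (r - k) ∧ medianR y = l[k] := by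
  set l := (List.ofFn y).mergeSort (fun a b => a ≤ b)
  have hlen : l.length = r := by simp [l]
  refine ⟨l, (r + 1) / 2 - 1, by omega, List.pairwise_mergeSort' _ _, List.mergeSort_perm _ _,
    hlen, by omega, by omega, ?_⟩
  rw [medianR, List.getD_eq_getElem]

lemma le_two_mul_card_medianR_le : r ≤ 2 * #{i | medianR y ≤ y i} := by
  rcases Nat.eq_zero_or_pos r with rfl | hr
  · simp
  obtain ⟨l, k, hk, hsorted, hperm, hlen, -, hr2, hmed⟩ := exists_medianR_eq_getElem y hr
  have hdrop : (l.drop k).countP (fun x => decide (l[k] ≤ x)) = r - k := by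
    have hcons := hsorted.drop (i := k)
    rw [List.drop_eq_getElem_cons hk, List.pairwise_cons] at hcons
    rw [List.countP_eq_length.mpr, List.length_drop, hlen]
    intro a ha
    rw [List.drop_eq_getElem_cons hk, List.mem_cons] at ha
    rcases ha with rfl | ha
    · simp
    · simpa using hcons.1 a ha
  rw [hmed, card_filter_eq_countP_ofFn y (l[k] ≤ ·), ← hperm.countP_eq]
  have := (List.drop_sublist k l).countP_le (p := fun x => decide (l[k] ≤ x))
  omega

lemma le_two_mul_card_le_medianR : r ≤ 2 * #{i | y i ≤ medianR y} := by
  rcases Nat.eq_zero_or_pos r with rfl | hr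
  · simp
  obtain ⟨l, k, hk, hsorted, hperm, hlen, hr2, -, hmed⟩ := exists_medianR_eq_getElem y hr
  have htake : (l.take (k + 1)).countP (fun x => decide (x ≤ l[k])) = k + 1 := by
    have happ := hsorted.take (i := k + 1)
    rw [← List.take_append_getElem hk, List.pairwise_append] at happ
    rw [List.countP_eq_length.mpr, List.length_take, hlen]
    · omega
    intro a ha
    rw [← List.take_append_getElem hk, List.mem_append, List.mem_singleton] at ha
    rcases ha with ha | rfl
    · simpa using happ.2.2 a ha
    · simp
  rw [hmed, card_filter_eq_countP_ofFn y (· ≤ l[k]), ← hperm.countP_eq]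
  have := (List.take_sublist (k + 1) l).countP_le (p := fun x => decide (x ≤ l[k]))
  omega

lemma le_two_mul_card_of_lt_abs_medianR_sub {μ t : ℝ} (h : t < |medianR y - μ|) :
    r ≤ 2 * #{i | t < |y i - μ|} := by
  rcases lt_abs.mp h with h | h
  · exact (le_two_mul_card_medianR_le y).trans <| Nat.mul_le_mul_left 2 <| Finset.card_le_card <|
      Finset.monotone_filter_right _ fun i _ hi => lt_abs.mpr (Or.inl (by linarith))
  · exact (le_two_mul_card_le_medianR y).trans <| Nat.mul_le_mul_left 2 <| Finset.card_le_card <|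
      Finset.monotone_filter_right _ fun i _ hi => lt_abs.mpr (Or.inr (by linarith))

end Median

theorem prOf_lt_abs_medianR_sampleMean_sub_le {β : Type*} [Fintype β] {p : β → ℝ}
    (hp0 : ∀ x, 0 ≤ p x) (hp1 : ∑ x, p x = 1) {r ℓ : ℕ} (hℓ : 0 < ℓ) {Y : β → ℝ} {μ t : ℝ}
    (hμ : ∑ x, p x * Y x = μ) (ht : 0 ≤ t) (hvar : 4 * ∑ x, p x * (Y x - μ) ^ 2 ≤ ℓ * t ^ 2) :
    prOf (fun ω : Fin r → Fin ℓ → β => ∏ i, ∏ j, p (ω i j))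
      {ω | t < |medianR (fun i => 1 / (ℓ : ℝ) * ∑ j, Y (ω i j)) - μ|} ≤ (97 / 112) ^ r := by
  have hpool0 : ∀ η : Fin ℓ → β, 0 ≤ ∏ j, p (η j) := fun η => Finset.prod_nonneg fun j _ => hp0 _
  refine (prOf_mono (fun ω => Finset.prod_nonneg fun i _ => hpool0 (ω i))
    fun ω hω => le_two_mul_card_of_lt_abs_medianR_sub _ hω).trans ?_
  exact prOf_le_two_mul_card_mem_le hpool0 (sum_prod_pi_eq_one hp1)
    (prOf_lt_abs_sampleMean_sub_le_quarter hp0 hp1 hℓ hμ ht hvar) r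

lemma pow_le_div_of_mul_log_le {A δ : ℝ} (hA : 0 < A) (hδ : 0 < δ) {r : ℕ}
    (hr : 28 * Real.log (A / δ) ≤ r) : (97 / 112 : ℝ) ^ r ≤ δ / A := by
  calc (97 / 112 : ℝ) ^ r ≤ Real.exp (-(1 / 28)) ^ r :=
        pow_le_pow_left₀ (by norm_num) (by linarith [Real.add_one_le_exp (-(1 / 28 : ℝ))]) r
    _ = Real.exp (-(r / 28)) := by rw [← Real.exp_nat_mul]; ring_nf
    _ ≤ Real.exp (-Real.log (A / δ)) := Real.exp_le_exp.mpr (by linarith)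
    _ = δ / A := by rw [Real.exp_neg, Real.exp_log (div_pos hA hδ), inv_div]

/-- Every set of size at most `s + 1` is `∅` or `insert v S'` with `#S' ≤ s`. -/
lemma card_filter_card_le_le_pow (V : Type*) [Fintype V] [DecidableEq V] (s : ℕ) :
    #{S : Finset V | S.card ≤ s} ≤ (Fintype.card V + 1) ^ s := by
  induction s with
  | zero => simp [Finset.card_eq_zero, Finset.filter_eq']
  | succ s ih =>
    have hsub : ({S : Finset V | S.card ≤ s + 1} : Finset (Finset V)) ⊆
        (Finset.univ ×ˢ Finset.univ.filter (fun S : Finset V => S.card ≤ s)).image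
          fun oS : Option V × Finset V => oS.1.elim oS.2 (insert · oS.2) := by
      intro S hS
      simp only [Finset.mem_filter, Finset.mem_univ, true_and] at hS
      simp only [Finset.mem_image, Finset.mem_product, Finset.mem_univ, Finset.mem_filter,
        true_and, Prod.exists]
      rcases S.eq_empty_or_nonempty with rfl | ⟨v, hv⟩
      · exact ⟨none, ∅, by simp, rfl⟩
      · exact ⟨some v, S.erase v, by rw [Finset.card_erase_of_mem hv]; omega,
          Finset.insert_erase hv⟩
    calc _ ≤ _ := Finset.card_le_card hsub
      _ ≤ (Fintype.card V + 1) * #{S : Finset V | S.card ≤ s} := by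
        refine Finset.card_image_le.trans ?_
        rw [Finset.card_product, Finset.card_univ, Fintype.card_option]
      _ ≤ (Fintype.card V + 1) ^ (s + 1) := by
        rw [pow_succ']
        exact Nat.mul_le_mul_left _ ih

lemma sum_filter_card_le_le {V : Type*} [Fintype V] [DecidableEq V] {s : ℕ} {f : Finset V → ℝ}
    {δ : ℝ} (hδ : 0 ≤ δ)
    (hf : ∀ S : Finset V, S.card ≤ s → f S ≤ δ / (Fintype.card V + 1) ^ s) :
    ∑ S ∈ Finset.univ.filter (fun S : Finset V => S.card ≤ s), f S ≤ δ := by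
  have hA : (0 : ℝ) < (Fintype.card V + 1) ^ s := by positivity
  calc _ ≤ ∑ _S ∈ Finset.univ.filter (fun S : Finset V => S.card ≤ s),
        δ / (Fintype.card V + 1) ^ s := Finset.sum_le_sum fun S hS => hf S (by simpa using hS)
    _ ≤ δ := by
      rw [Finset.sum_const, nsmul_eq_mul, mul_div_assoc', div_le_iff₀ hA, mul_comm]
      gcongr
      exact_mod_cast card_filter_card_le_le_pow V s

lemma le_pow_mul_add_mul_geom_sum {x : ℕ → ℝ} {q b : ℝ} (hq : 0 ≤ q) {n : ℕ}
    (h : ∀ k < n, x (k + 1) ≤ q * x k + b) :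
    x n ≤ q ^ n * x 0 + b * ∑ j ∈ Finset.range n, q ^ j := by
  induction n with
  | zero => simp
  | succ n ih =>
    calc x (n + 1) ≤ q * x n + b := h n n.lt_succ_self
      _ ≤ q * (q ^ n * x 0 + b * ∑ j ∈ Finset.range n, q ^ j) + b :=
        by gcongr; exact ih fun k hk => h k (hk.trans n.lt_succ_self)
      _ = q ^ (n + 1) * x 0 + b * ∑ j ∈ Finset.range (n + 1), q ^ j := by
        rw [Finset.sum_range_succ', pow_zero]
        simp_rw [pow_succ', ← Finset.mul_sum]
        ring

section Greedy

variable {V : Type*} [DecidableEq V] {F : Finset V → ℝ}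

lemma sub_le_sum_insert_sub (hsub : SubmodularFn F) (A D : Finset V) :
    F (A ∪ D) - F A ≤ ∑ x ∈ D, (F (insert x A) - F A) := by
  induction D using Finset.induction_on with
  | empty => simp
  | insert x D hxD ih =>
    rw [Finset.sum_insert hxD, Finset.union_insert]
    by_cases hxA : x ∈ A
    · rw [Finset.insert_eq_of_mem (Finset.mem_union_left D hxA), Finset.insert_eq_of_mem hxA]
      linarith
    · have := hsub A (A ∪ D) Finset.subset_union_left x (by simp [hxA, hxD])
      linarith

lemma exists_sub_le_card_mul_insert_sub (hmono : MonotoneFn F) (hsub : SubmodularFn F)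
    {P S : Finset V} (h : F P < F S) :
    ∃ u ∉ P, F S - F P ≤ S.card * (F (insert u P) - F P) := by
  have hS : S.Nonempty := Finset.nonempty_iff_ne_empty.mpr fun hS =>
    h.not_ge (hS ▸ hmono ∅ P (Finset.empty_subset P))
  have hsum : ∑ _x ∈ S, (F S - F P) ≤ ∑ x ∈ S, S.card * (F (insert x P) - F P) := by
    rw [Finset.sum_const, nsmul_eq_mul, ← Finset.mul_sum]
    gcongr
    linarith [hmono S (P ∪ S) Finset.subset_union_right, sub_le_sum_insert_sub hsub P S]
  obtain ⟨u, -, hu⟩ := Finset.exists_le_of_sum_le hS hsum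
  refine ⟨u, fun huP => ?_, hu⟩
  rw [Finset.insert_eq_of_mem huP, sub_self, mul_zero] at hu
  linarith

variable {s : ℕ} {m : Finset V → ℝ} {α : ℝ}

/-- Submodularity gives some `u` whose gain is at least `(F S - F P) / s`, and through the
`α`-accurate oracle the greedy choice `v` loses at most `2α` against `u`. -/
lemma sub_insert_le_of_oracle_le (hs : 0 < s) (hmono : MonotoneFn F) (hsub : SubmodularFn F)
    (hm : ∀ S : Finset V, S.card ≤ s → |m S - F S| ≤ α) {P : Finset V} (hP : P.card < s) {v : V}
    (hv : ∀ u ∉ P, m (insert u P) ≤ m (insert v P)) {S : Finset V} (hS : S.card ≤ s) :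
    F S - F (insert v P) ≤ (1 - 1 / s) * (F S - F P) + 2 * α := by
  have hsR : (0 : ℝ) < s := Nat.cast_pos.mpr hs
  have hins : ∀ u, (insert u P).card ≤ s := fun u => (Finset.card_insert_le u P).trans hP
  have hα : 0 ≤ α := (abs_nonneg _).trans (hm ∅ (by simp))
  suffices F P + (F S - F P) / s ≤ F (insert v P) + 2 * α by
    rw [sub_mul, one_mul, one_div_mul_eq_div]
    linarith
  rcases le_or_gt (F S) (F P) with hSP | hPS
  · have : (F S - F P) / s ≤ 0 := div_nonpos_of_nonpos_of_nonneg (by linarith) hsR.le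
    linarith [hmono P (insert v P) (Finset.subset_insert v P)]
  · obtain ⟨u, hu, hgain⟩ := exists_sub_le_card_mul_insert_sub hmono hsub hPS
    have hgain' : (F S - F P) / s ≤ F (insert u P) - F P := by
      rw [div_le_iff₀ hsR, mul_comm]
      refine hgain.trans (mul_le_mul_of_nonneg_right (by exact_mod_cast hS) ?_)
      linarith [hmono P (insert u P) (Finset.subset_insert u P)]
    linarith [abs_le.mp (hm _ (hins u)), abs_le.mp (hm _ (hins v)), hv u hu]

end Greedy

section GreedySequence

variable {V : Type*} [DecidableEq V] {s : ℕ} (σ : Fin s → V)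

def greedyPrefix (k : ℕ) : Finset V := ({j | (j : ℕ) < k} : Finset (Fin s)).image σ

def IsGreedy (m : Finset V → ℝ) : Prop :=
  ∀ i, ∀ u ∉ (Finset.Iio i).image σ,
    m (insert u ((Finset.Iio i).image σ)) ≤ m (insert (σ i) ((Finset.Iio i).image σ))

lemma greedyPrefix_zero : greedyPrefix σ 0 = ∅ := by simp [greedyPrefix]

lemma image_Iio_eq_greedyPrefix (i : Fin s) : (Finset.Iio i).image σ = greedyPrefix σ i := by
  unfold greedyPrefix
  congr 1
  ext j
  simp

lemma greedyPrefix_succ {k : ℕ} (hk : k < s) :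
    greedyPrefix σ (k + 1) = insert (σ ⟨k, hk⟩) (greedyPrefix σ k) := by
  rw [greedyPrefix, greedyPrefix, ← Finset.image_insert]
  congr 1
  ext j
  simp only [Finset.mem_filter, Finset.mem_univ, true_and, Finset.mem_insert, Fin.ext_iff]
  omega

lemma greedyPrefix_self : greedyPrefix σ s = Finset.univ.image σ := by
  simp [greedyPrefix]

lemma card_greedyPrefix_le (k : ℕ) : (greedyPrefix σ k).card ≤ k :=
  Finset.card_image_le.trans (Fin.card_filter_val_lt.trans_le (min_le_right s k))

variable {σ} {F m : Finset V → ℝ} {α : ℝ}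

theorem IsGreedy.one_sub_pow_mul_le (hσ : IsGreedy σ m) (hs : 0 < s) (hmono : MonotoneFn F)
    (hsub : SubmodularFn F) (hF0 : 0 ≤ F ∅) (hm : ∀ S : Finset V, S.card ≤ s → |m S - F S| ≤ α)
    {S : Finset V} (hS : S.card ≤ s) :
    (1 - (1 - 1 / s) ^ s) * (F S - 2 * s * α) ≤ F (Finset.univ.image σ) := by
  have hsR : (0 : ℝ) < s := Nat.cast_pos.mpr hs
  have hq : 0 ≤ 1 - 1 / (s : ℝ) := sub_nonneg.mpr (div_le_one_of_le₀ (by exact_mod_cast hs) hsR.le)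
  have hgap := le_pow_mul_add_mul_geom_sum (x := fun k => F S - F (greedyPrefix σ k)) hq
    (b := 2 * α) (n := s) fun k hk => by
      have hv := hσ ⟨k, hk⟩
      simp only [image_Iio_eq_greedyPrefix] at hv
      rw [greedyPrefix_succ σ hk]
      exact sub_insert_le_of_oracle_le hs hmono hsub hm
        ((card_greedyPrefix_le σ k).trans_lt hk) hv hS
  have hgeom : ∑ j ∈ Finset.range s, (1 - 1 / (s : ℝ)) ^ j = s * (1 - (1 - 1 / s) ^ s) := by
    rw [← mul_neg_geom_sum, sub_sub_cancel, ← mul_assoc, mul_one_div_cancel hsR.ne', one_mul]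
  simp only [greedyPrefix_zero, greedyPrefix_self, hgeom] at hgap
  nlinarith [pow_nonneg hq s]

end GreedySequence

section Diffusion

variable {V : Type*} [Fintype V] [DecidableEq V]

lemma reach_mono {φ : ActFam V} (hφ : ∀ v, Monotone (φ v)) {A B : Finset V} (h : A ⊆ B)
    (t : ℕ) : reach φ A t ⊆ reach φ B t := by
  induction t with
  | zero => exact h
  | succ t ih =>
    refine Finset.union_subset_union ih (Finset.monotone_filter_right _ fun v _ => ?_)
    exact Bool.le_iff_imp.mp (hφ v (Finset.erase_subset_erase v ih))

lemma infl_nonneg {p : ActFam V → ℝ} (hp : ∀ φ, 0 ≤ p φ) {H : Finset V → ℝ}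
    (hH : ∀ S, 0 ≤ H S) (τ : ℕ) (S : Finset V) : 0 ≤ infl p H τ S :=
  Finset.sum_nonneg fun φ _ => mul_nonneg (hp φ) (hH _)

lemma infl_mono (G : SDM V) {H : Finset V → ℝ} (hH : MonotoneFn H) (τ : ℕ) :
    MonotoneFn (infl G.p H τ) := by
  intro A B hAB
  refine Finset.sum_le_sum fun φ _ => ?_
  by_cases hp : G.p φ = 0
  · simp [hp]
  · exact mul_le_mul_of_nonneg_left (hH _ _ (reach_mono (G.mono φ hp) hAB τ)) (G.nonneg φ)

variable (p : ActFam V → ℝ) (H : Finset V → ℝ) (τ s : ℕ)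

lemma finite_setOf_infl : {x : ℝ | ∃ S : Finset V, S.card ≤ s ∧ x = infl p H τ S}.Finite :=
  (Set.finite_range (infl p H τ)).subset fun _ ⟨S, _, hS⟩ => ⟨S, hS.symm⟩

lemma infl_le_OPTs {S : Finset V} (hS : S.card ≤ s) : infl p H τ S ≤ OPTs p H τ s :=
  le_csSup (finite_setOf_infl p H τ s).bddAbove ⟨S, hS, rfl⟩

lemma exists_infl_eq_OPTs : ∃ S : Finset V, S.card ≤ s ∧ infl p H τ S = OPTs p H τ s := by
  have hne : {x : ℝ | ∃ S : Finset V, S.card ≤ s ∧ x = infl p H τ S}.Nonempty :=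
    ⟨_, ∅, by simp, rfl⟩
  obtain ⟨S, hS, hOPT⟩ := hne.csSup_mem (finite_setOf_infl p H τ s)
  exact ⟨S, hS, hOPT.symm⟩

lemma maxSingle_le_OPTs (hs : 1 ≤ s) (hOPT : 0 ≤ OPTs p H τ s) :
    maxSingle p H τ ≤ OPTs p H τ s :=
  Real.iSup_le (fun v => infl_le_OPTs p H τ s (by simpa using hs)) hOPT

lemma VarBoundC.prOf_lt_abs_medianR_sub_le {G : SDM V} {H : Finset V → ℝ} (hH : ∀ S, 0 ≤ H S)
    {τ : ℕ} {c : ℝ} (hvar : VarBoundC G.p H τ c) (hc : 0 < c) {θ : ℝ} (hθ : 0 ≤ θ) {r ℓ : ℕ}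
    (hℓ : 4 * c ≤ ℓ * θ ^ 2) (S : Finset V) :
    prOf (fun ω : Fin r → Fin ℓ → ActFam V => ∏ i, ∏ j, G.p (ω i j))
      {ω | θ * max (infl G.p H τ S) (maxSingle G.p H τ) <
        |medianR (fun i => 1 / (ℓ : ℝ) * ∑ j, H (reach (ω i j) S τ)) - infl G.p H τ S|}
      ≤ (97 / 112) ^ r := by
  have hI : 0 ≤ infl G.p H τ S := infl_nonneg G.nonneg hH τ S
  have hIM : infl G.p H τ S ≤ max (infl G.p H τ S) (maxSingle G.p H τ) := le_max_left _ _
  have hℓ0 : 0 < ℓ := Nat.cast_pos.mp (pos_of_mul_pos_left (by linarith) (sq_nonneg θ))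
  refine prOf_lt_abs_medianR_sampleMean_sub_le G.nonneg G.sum_one hℓ0
    (Y := fun φ => H (reach φ S τ)) rfl (mul_nonneg hθ (hI.trans hIM)) ?_
  calc 4 * varReach G.p H τ S ≤ 4 * c * max (infl G.p H τ S) (maxSingle G.p H τ) ^ 2 := by
        nlinarith [hvar S, mul_le_mul_of_nonneg_left hIM (mul_nonneg hc.le (hI.trans hIM))]
    _ ≤ ℓ * (θ * max (infl G.p H τ S) (maxSingle G.p H τ)) ^ 2 := by
        rw [mul_pow, ← mul_assoc]; gcongr

theorem IsGreedy.one_sub_pow_mul_OPTs_le {G : SDM V} {H : Finset V → ℝ} (hH : ∀ S, 0 ≤ H S)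
    (hHmono : MonotoneFn H) {τ : ℕ} (hsub : SubmodularFn (infl G.p H τ)) {s : ℕ} (hs : 1 ≤ s)
    {ε θ : ℝ} (hθ : 0 ≤ θ) (hθε : 2 * s * θ ≤ ε) {m : Finset V → ℝ}
    (hm : ∀ S : Finset V, S.card ≤ s →
      |m S - infl G.p H τ S| ≤ θ * max (infl G.p H τ S) (maxSingle G.p H τ))
    {σ : Fin s → V} (hσ : IsGreedy σ m) :
    (1 - (1 - 1 / (s : ℝ)) ^ s) * (1 - ε) * OPTs G.p H τ s ≤
      infl G.p H τ (Finset.univ.image σ) := by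
  obtain ⟨S₀, hS₀, hOPT⟩ := exists_infl_eq_OPTs G.p H τ s
  have hOPT0 : 0 ≤ OPTs G.p H τ s := hOPT ▸ infl_nonneg G.nonneg hH τ S₀
  have hacc : ∀ S : Finset V, S.card ≤ s → |m S - infl G.p H τ S| ≤ θ * OPTs G.p H τ s :=
    fun S hS => (hm S hS).trans <| mul_le_mul_of_nonneg_left
      (max_le (infl_le_OPTs _ _ _ _ hS) (maxSingle_le_OPTs _ _ _ _ hs hOPT0)) hθ
  have h := hσ.one_sub_pow_mul_le hs (infl_mono G hHmono τ) hsub (infl_nonneg G.nonneg hH τ ∅)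
    hacc hS₀
  have hq : 0 ≤ 1 - (1 - 1 / (s : ℝ)) ^ s := sub_nonneg.mpr (pow_le_one₀
    (sub_nonneg.mpr (div_le_one_of_le₀ (by exact_mod_cast hs) (by positivity))) (by simp))
  rw [hOPT] at h
  rw [mul_assoc]
  exact (mul_le_mul_of_nonneg_left (by nlinarith) hq).trans h

end Diffusion

theorem greedy_median_of_averages_general {V : Type*} [Fintype V] [DecidableEq V]
    (G : SDM V) (H : Finset V → ℝ)
    (hHnn : ∀ S, 0 ≤ H S) (hHmono : MonotoneFn H)
    (τ : ℕ) (hsub : SubmodularFn (infl G.p H τ))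
    (c : ℝ) (hc : 1 ≤ c) (hvar : VarBoundC G.p H τ c)
    (s : ℕ) (hs : 1 ≤ s)
    (ε δ : ℝ) (hε0 : 0 < ε) (hε1 : ε < 1) (hδ0 : 0 < δ)
    (r ℓ : ℕ)
    (hr : (r : ℝ) ≥ 28 * Real.log (((Fintype.card V : ℝ) + 1) ^ s / δ))
    (hℓ : (ℓ : ℝ) ≥ 4 * c * (14 * s / (ε * (1 - ε))) ^ 2)
    (seq : (Fin r → Fin ℓ → ActFam V) → Fin s → V)
    (hgreedy : ∀ ω, ∀ i : Fin s,
      seq ω i ∉ (Finset.Iio i).image (seq ω) ∧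
      ∀ u : V, u ∉ (Finset.Iio i).image (seq ω) →
        medianR (fun a => (1 / (ℓ : ℝ)) *
            ∑ j, H (reach (ω a j) (insert u ((Finset.Iio i).image (seq ω))) τ)) ≤
          medianR (fun a => (1 / (ℓ : ℝ)) *
            ∑ j, H (reach (ω a j) (insert (seq ω i) ((Finset.Iio i).image (seq ω))) τ))) :
    prOf (fun ω : Fin r → Fin ℓ → ActFam V => ∏ i, ∏ j, G.p (ω i j))
      {ω | (1 - (1 - 1 / (s : ℝ)) ^ s) * (1 - ε) * OPTs G.p H τ s ≤
        infl G.p H τ (Finset.univ.image (seq ω))} ≥ 1 - δ := by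
  have hw0 : ∀ ω : Fin r → Fin ℓ → ActFam V, 0 ≤ ∏ i, ∏ j, G.p (ω i j) :=
    fun ω => Finset.prod_nonneg fun i _ => Finset.prod_nonneg fun j _ => G.nonneg _
  have hw1 := sum_prod_pi_eq_one (ι := Fin r) (sum_prod_pi_eq_one (ι := Fin ℓ) G.sum_one)
  have hε1' : 0 < 1 - ε := sub_pos.mpr hε1
  have hsR : (0 : ℝ) < s := by exact_mod_cast hs
  set θ := ε * (1 - ε) / (14 * s) with hθ
  have hℓθ : 4 * c ≤ ℓ * θ ^ 2 := by
    refine le_trans (le_of_eq ?_) (mul_le_mul_of_nonneg_right hℓ (sq_nonneg θ))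
    rw [hθ]
    field_simp
  have hθε : 2 * s * θ ≤ ε := by
    rw [show 2 * s * θ = ε * (1 - ε) / 7 by rw [hθ]; field_simp; ring]
    nlinarith
  set bad := fun S : Finset V => {ω : Fin r → Fin ℓ → ActFam V |
    θ * max (infl G.p H τ S) (maxSingle G.p H τ) <
      |medianR (fun i => 1 / (ℓ : ℝ) * ∑ j, H (reach (ω i j) S τ)) - infl G.p H τ S|}
  set small := Finset.univ.filter fun S : Finset V => S.card ≤ s
  calc 1 - δ ≤ 1 - ∑ S ∈ small, prOf (fun ω => ∏ i, ∏ j, G.p (ω i j)) (bad S) := by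
        linarith [sum_filter_card_le_le hδ0.le fun S _ =>
          (hvar.prOf_lt_abs_medianR_sub_le hHnn (by linarith) (by positivity) hℓθ S).trans
            (pow_le_div_of_mul_log_le (by positivity) hδ0 hr)]
    _ ≤ _ := one_sub_sum_prOf_le_prOf hw0 hw1 small bad
    _ ≤ _ := prOf_mono hw0 fun ω hω => IsGreedy.one_sub_pow_mul_OPTs_le hHnn hHmono hsub hs
      (by positivity) hθε (fun S hS => not_lt.mp (hω S (by simpa [small] using hS)))
      fun i u hu => (hgreedy ω i).2 u hu

/-- **Greedy maximization over the median-of-averages oracle.**  For an SDM with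
submodular influence function satisfying the variance bound with constant `c ≥ 1`,
with `r ≥ 28·ln((n+1)ˢ/δ)` pools of `ℓ ≥ 4·c·(14s/(ε(1−ε)))²` simulations each,
the set of the first `s` greedily chosen nodes (w.r.t. the oracle) has influence
at least `(1−(1−1/s)ˢ)·(1−ε)·OPT^τ_s` with probability at least `1 − δ`. -/
theorem greedy_median_of_averages {V : Type*} [Fintype V] [DecidableEq V]
    (G : SDM V) (H : Finset V → ℝ)
    (hH0 : H ∅ = 0) (hHnn : ∀ S, 0 ≤ H S) (hHmono : MonotoneFn H)
    (hn : 2 ≤ Fintype.card V)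
    (τ : ℕ) (hsub : SubmodularFn (infl G.p H τ))
    (c : ℝ) (hc : 1 ≤ c) (hvar : VarBoundC G.p H τ c)
    (s : ℕ) (hs : 1 ≤ s)
    (ε δ : ℝ) (hε0 : 0 < ε) (hε1 : ε < 1) (hδ0 : 0 < δ) (hδ1 : δ < 1)
    (r ℓ : ℕ)
    (hr : (r : ℝ) ≥ 28 * Real.log (((Fintype.card V : ℝ) + 1) ^ s / δ))
    (hℓ : (ℓ : ℝ) ≥ 4 * c * (14 * s / (ε * (1 - ε))) ^ 2)
    (seq : (Fin r → Fin ℓ → ActFam V) → Fin s → V)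
    (hgreedy : ∀ ω, ∀ i : Fin s,
      seq ω i ∉ (Finset.Iio i).image (seq ω) ∧
      ∀ u : V, u ∉ (Finset.Iio i).image (seq ω) →
        medianR (fun a => (1 / (ℓ : ℝ)) *
            ∑ j, H (reach (ω a j) (insert u ((Finset.Iio i).image (seq ω))) τ)) ≤
          medianR (fun a => (1 / (ℓ : ℝ)) *
            ∑ j, H (reach (ω a j) (insert (seq ω i) ((Finset.Iio i).image (seq ω))) τ))) :
    prOf (fun ω : Fin r → Fin ℓ → ActFam V => ∏ i, ∏ j, G.p (ω i j))
      {ω | (1 - (1 - 1 / (s : ℝ)) ^ s) * (1 - ε) * OPTs G.p H τ s ≤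
        infl G.p H τ (Finset.univ.image (seq ω))} ≥ 1 - δ :=
  greedy_median_of_averages_general G H hHnn hHmono τ hsub c hc hvar s hs ε δ hε0 hε1 hδ0 r ℓ hr hℓ
    seq hgreedy
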